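/- Fix integers d ≥ 1 and n ≥ 1. For g > 0 and ρ ∈ ℝ define the weight of Y ∈ W_n as Q_{g,ρ,n}(Y) = (∏_{x∈range(Y)} F_{g,ρ}(n_x(Y))) / (Σ_{Y'∈W_n} ∏_{x∈range(Y')} F_{g,ρ}(n_x(Y'))). Suppose ρ = ρ(g) is chosen so that α(g,ρ(g)) = (ρ(g)−1)/(2√g) → +∞ as g → ∞. Then for every Y ∈ W_n, lim_{g→∞} Q_{g,ρ(g),n}(Y) = (1/c_n)·1_{Y ∈ S_n}; i.e. the limit is the uniform measure on n-step self-avoiding walks. -/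

import Mathlib

/-!
Formalization of statements from "The strong interaction limit of
continuous-time weakly self-avoiding walk" by Brydges, Dahlqvist, Slade.

An `n`-step nearest-neighbour walk on `ℤ^d` starting at the origin is encoded
bijectively by its sequence of steps `s : Fin n → Fin d × Bool`, a step being a
coordinate direction together with a sign.
-/

open scoped BigOperators Topology
open Filter

namespace StrongInteraction

/-- The unit step in coordinate direction `e.1`, with sign `e.2`. -/
def stepVec (d : ℕ) (e : Fin d × Bool) : Fin d → ℤ :=
  fun i => if i = e.1 then (if e.2 then 1 else -1) else 0

/-- `walkPos s k` is the position `Y_k` of the walk started at the origin whose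
successive nearest-neighbour steps are given by `s`. -/
def walkPos {d n : ℕ} (s : Fin n → Fin d × Bool) (k : Fin (n + 1)) : Fin d → ℤ :=
  ∑ i ∈ Finset.univ.filter (fun i : Fin n => (i : ℕ) < (k : ℕ)), stepVec d (s i)

/-- `n_x(Y)`: the number of visits to `x` by the walk. -/
def visits {d n : ℕ} (s : Fin n → Fin d × Bool) (x : Fin d → ℤ) : ℕ :=
  (Finset.univ.filter (fun k : Fin (n + 1) => walkPos s k = x)).card

/-- The set of distinct vertices visited by the walk. -/
def walkRange {d n : ℕ} (s : Fin n → Fin d × Bool) : Finset (Fin d → ℤ) :=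
  Finset.image (walkPos s) Finset.univ

/-- A walk is self-avoiding when its positions are pairwise distinct. -/
def SelfAvoiding {d n : ℕ} (s : Fin n → Fin d × Bool) : Prop :=
  Function.Injective (walkPos s)

instance {d n : ℕ} (s : Fin n → Fin d × Bool) : Decidable (SelfAvoiding s) :=
  inferInstanceAs (Decidable (Function.Injective (walkPos s)))

/-- `c_n`: the number of `n`-step self-avoiding walks. -/
def csaw (d n : ℕ) : ℕ :=
  (Finset.univ.filter fun s : Fin n → Fin d × Bool => SelfAvoiding s).card

/-- `F_{g,ρ}(m) = ∫_0^∞ (s^{m-1}/(m-1)!) e^{-s - g s² + ρ s} ds`, the contribution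
of a vertex visited `m` times, obtained from the Gamma(m,1) density of the sum of
`m` independent Exp(1) holding times. -/
noncomputable def F (g ρ : ℝ) (m : ℕ) : ℝ :=
  ∫ t in Set.Ioi (0 : ℝ),
    (t ^ (m - 1) / (Nat.factorial (m - 1))) * Real.exp (-t - g * t ^ 2 + ρ * t)

/-- The quick-step probability weight `Q_{g,ρ,n}(Y)` of a walk. -/
noncomputable def Qweight (d n : ℕ) (g ρ : ℝ) (s : Fin n → Fin d × Bool) : ℝ :=
  (∏ x ∈ walkRange s, F g ρ (visits s x)) /
    ∑ s' : Fin n → Fin d × Bool, ∏ x ∈ walkRange s', F g ρ (visits s' x)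

/-!
Completing the square, `-t - g t² + ρ t = α² - (√g t - α)²`, so the integrand of `F_{g,ρ}` is
`e^{α²}` times a Gaussian bump of width `1/√g` centred at `α/√g`. This gives
`F(1) ≥ e^{α² - 1}/√g` and, bounding `(√g t)^{m-1}/(m-1)! ≤ e^{√g t}`,
`F(m) ≤ √π e^{(α + 1/2)²}/√g^m`; hence `F(m)/F(1)^m ≤ √π e^{(α + 1/2)² - m(α² - 1)} → 0`
for `m ≥ 2` as `α → ∞`. Since the visit counts of a walk add up to `n + 1`, replacing each site
weight `F(m)` by `F(m)/F(1)^m` does not change `Q`, and after this normalisation the weight of a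
walk tends to `1` if it is self-avoiding and to `0` otherwise.
-/

open MeasureTheory Real
open scoped Nat

section Walks

variable {d n : ℕ}

-- `Qweight d n g ρ` is the normalisation of `walkWeight (F g ρ)` over all walks.
def walkWeight (w : ℕ → ℝ) (s : Fin n → Fin d × Bool) : ℝ :=
  ∏ x ∈ walkRange s, w (visits s x)

lemma sum_visits_walkRange (s : Fin n → Fin d × Bool) :
    ∑ x ∈ walkRange s, visits s x = n + 1 :=
  (Finset.card_eq_sum_card_image (walkPos s) Finset.univ).symm.trans (by simp)

lemma one_le_visits {s : Fin n → Fin d × Bool} {x : Fin d → ℤ} (hx : x ∈ walkRange s) :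
    1 ≤ visits s x := by
  obtain ⟨k, -, rfl⟩ := Finset.mem_image.1 hx
  exact Finset.card_pos.2 ⟨k, by simp⟩

lemma selfAvoiding_iff_visits_eq_one (s : Fin n → Fin d × Bool) :
    SelfAvoiding s ↔ ∀ x ∈ walkRange s, visits s x = 1 := by
  constructor
  · refine fun hs x hx =>
      le_antisymm (Finset.card_le_one.2 fun k hk l hl => hs ?_) (one_le_visits hx)
    simp only [Finset.mem_filter] at hk hl
    rw [hk.2, hl.2]
  · intro h k l hkl
    have hk := h (walkPos s k) (Finset.mem_image_of_mem _ (Finset.mem_univ k))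
    exact Finset.card_le_one.1 hk.le k (by simp) l (by simp [hkl])

lemma walkPos_const_apply (e : Fin d × Bool) (k : Fin (n + 1)) :
    walkPos (fun _ : Fin n => e) k e.1 = if e.2 then (k : ℤ) else -k := by
  have hk : min n k = k := min_eq_right (Nat.lt_succ_iff.1 k.isLt)
  obtain ⟨i, _ | _⟩ := e <;> simp [walkPos, stepVec, Fin.card_filter_val_lt, hk]

lemma selfAvoiding_const (e : Fin d × Bool) : SelfAvoiding (fun _ : Fin n => e) := by
  intro k l hkl
  have := congrFun hkl e.1
  rw [walkPos_const_apply, walkPos_const_apply] at this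
  obtain ⟨i, _ | _⟩ := e <;> simpa [Fin.ext_iff] using this

lemma csaw_pos (hd : 1 ≤ d) (n : ℕ) : 0 < csaw d n :=
  Finset.card_pos.2
    ⟨_, Finset.mem_filter.2 ⟨Finset.mem_univ _, selfAvoiding_const (⟨0, hd⟩, true)⟩⟩

lemma walkWeight_div_pow (w : ℕ → ℝ) (c : ℝ) (s : Fin n → Fin d × Bool) :
    walkWeight (fun m => w m / c ^ m) s = walkWeight w s / c ^ (n + 1) := by
  rw [walkWeight, Finset.prod_div_distrib, Finset.prod_pow_eq_pow_sum, sum_visits_walkRange,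
    walkWeight]

lemma tendsto_walkWeight {ι : Type*} {l : Filter ι} {w : ι → ℕ → ℝ}
    (hw₁ : Tendsto (fun i => w i 1) l (𝓝 1))
    (hw : ∀ m, 2 ≤ m → Tendsto (fun i => w i m) l (𝓝 0)) (s : Fin n → Fin d × Bool) :
    Tendsto (fun i => walkWeight (w i) s) l (𝓝 (if SelfAvoiding s then 1 else 0)) := by
  have hfactor : ∀ x ∈ walkRange s,
      Tendsto (fun i => w i (visits s x)) l (𝓝 (if visits s x = 1 then 1 else 0)) := by
    intro x hx
    split_ifs with h
    · rwa [h]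
    · exact hw _ (lt_of_le_of_ne (one_le_visits hx) (Ne.symm h))
  simpa only [walkWeight, Finset.prod_boole, ← selfAvoiding_iff_visits_eq_one] using
    tendsto_finsetProd _ hfactor

theorem tendsto_walkWeight_div_sum {ι : Type*} {l : Filter ι} (hd : 1 ≤ d) {w : ι → ℕ → ℝ}
    (hw₁ : ∀ᶠ i in l, w i 1 ≠ 0)
    (hw : ∀ m, 2 ≤ m → Tendsto (fun i => w i m / w i 1 ^ m) l (𝓝 0))
    (s : Fin n → Fin d × Bool) :
    Tendsto (fun i => walkWeight (w i) s / ∑ s' : Fin n → Fin d × Bool, walkWeight (w i) s') l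
      (𝓝 (if SelfAvoiding s then (csaw d n : ℝ)⁻¹ else 0)) := by
  set v : ι → ℕ → ℝ := fun i m => w i m / w i 1 ^ m
  have hv₁ : Tendsto (fun i => v i 1) l (𝓝 1) :=
    tendsto_const_nhds.congr' (hw₁.mono fun i hi => by simp [v, hi])
  have hv : ∀ s' : Fin n → Fin d × Bool, Tendsto (fun i => walkWeight (v i) s') l
      (𝓝 (if SelfAvoiding s' then 1 else 0)) := tendsto_walkWeight hv₁ hw
  have hsum : Tendsto (fun i => ∑ s' : Fin n → Fin d × Bool, walkWeight (v i) s') l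
      (𝓝 (csaw d n : ℝ)) := by
    simpa only [Finset.sum_boole, csaw] using tendsto_finsetSum Finset.univ fun s' _ => hv s'
  have hquot := (hv s).div hsum (Nat.cast_ne_zero.2 (csaw_pos hd n).ne')
  rw [show (if SelfAvoiding s then (1 : ℝ) else 0) / csaw d n =
      if SelfAvoiding s then (csaw d n : ℝ)⁻¹ else 0 by split_ifs <;> simp] at hquot
  refine hquot.congr' (hw₁.mono fun i hi => ?_)
  simp only [v, walkWeight_div_pow, ← Finset.sum_div]
  exact div_div_div_cancel_right₀ (pow_ne_zero _ hi) _ _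

end Walks

lemma exp_neg_mul_sq_add_mul_eq {a : ℝ} (ha : a ≠ 0) (b t : ℝ) :
    exp (-a * t ^ 2 + b * t) = exp (b ^ 2 / (4 * a)) * exp (-a * (t - b / (2 * a)) ^ 2) := by
  rw [← exp_add]; congr 1; field_simp; ring

lemma integrable_exp_neg_mul_sq_add_mul {a : ℝ} (ha : 0 < a) (b : ℝ) :
    Integrable fun t : ℝ => exp (-a * t ^ 2 + b * t) := by
  simp_rw [exp_neg_mul_sq_add_mul_eq ha.ne']
  exact ((integrable_exp_neg_mul_sq ha).comp_sub_right _).const_mul _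

lemma integral_exp_neg_mul_sq_add_mul {a : ℝ} (ha : 0 < a) (b : ℝ) :
    ∫ t : ℝ, exp (-a * t ^ 2 + b * t) = √(π / a) * exp (b ^ 2 / (4 * a)) := by
  simp_rw [exp_neg_mul_sq_add_mul_eq ha.ne', integral_const_mul,
    integral_sub_right_eq_self (fun t => exp (-a * t ^ 2)), integral_gaussian]
  ring

noncomputable def alpha (g ρ : ℝ) : ℝ := (ρ - 1) / (2 * √g)

lemma F_nonneg (g ρ : ℝ) (m : ℕ) : 0 ≤ F g ρ m :=
  setIntegral_nonneg measurableSet_Ioi fun t ht => by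
    have : (0 : ℝ) ≤ t := le_of_lt ht
    positivity

lemma F_succ_le {g : ℝ} (hg : 0 < g) (ρ : ℝ) (k : ℕ) :
    F g ρ (k + 1) ≤ √π * exp ((alpha g ρ + 1 / 2) ^ 2) / √g ^ (k + 1) := by
  have hsg : 0 < √g := sqrt_pos.2 hg
  have hint := integrable_exp_neg_mul_sq_add_mul hg (ρ - 1 + √g)
  have hpt : ∀ t ∈ Set.Ioi (0 : ℝ), t ^ k / k ! * exp (-t - g * t ^ 2 + ρ * t) ≤
      (√g ^ k)⁻¹ * exp (-g * t ^ 2 + (ρ - 1 + √g) * t) := by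
    intro t ht
    have hscaled := pow_div_factorial_le_exp _ (mul_nonneg hsg.le (le_of_lt ht)) k
    rw [mul_pow, mul_div_assoc, ← le_div_iff₀' (by positivity)] at hscaled
    calc t ^ k / k ! * exp (-t - g * t ^ 2 + ρ * t)
        ≤ exp (√g * t) / √g ^ k * exp (-t - g * t ^ 2 + ρ * t) := by gcongr
      _ = (√g ^ k)⁻¹ * exp (-g * t ^ 2 + (ρ - 1 + √g) * t) := by
        rw [div_eq_inv_mul, mul_assoc, ← exp_add]; ring_nf
  have hsq : (ρ - 1 + √g) ^ 2 / (4 * g) = (alpha g ρ + 1 / 2) ^ 2 := by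
    have : alpha g ρ + 1 / 2 = (ρ - 1 + √g) / (2 * √g) := by rw [alpha]; field_simp
    rw [this, div_pow, mul_pow, sq_sqrt hg.le]; ring
  calc F g ρ (k + 1)
      ≤ ∫ t in Set.Ioi 0, (√g ^ k)⁻¹ * exp (-g * t ^ 2 + (ρ - 1 + √g) * t) := by
        rw [F, Nat.add_sub_cancel]
        refine integral_mono_of_nonneg (ae_restrict_of_forall_mem measurableSet_Ioi fun t ht => ?_)
          (hint.const_mul _).integrableOn (ae_restrict_of_forall_mem measurableSet_Ioi hpt)
        have : (0 : ℝ) ≤ t := le_of_lt ht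
        positivity
    _ ≤ ∫ t, (√g ^ k)⁻¹ * exp (-g * t ^ 2 + (ρ - 1 + √g) * t) :=
        setIntegral_le_integral (hint.const_mul _) (ae_of_all _ fun t => by positivity)
    _ = √π * exp ((alpha g ρ + 1 / 2) ^ 2) / √g ^ (k + 1) := by
        rw [integral_const_mul, integral_exp_neg_mul_sq_add_mul hg, hsq, sqrt_div' _ hg.le]
        field_simp
        ring

lemma exp_sq_sub_one_div_sqrt_le_F_one {g ρ : ℝ} (hg : 0 < g) (hα : 0 ≤ alpha g ρ) :
    exp (alpha g ρ ^ 2 - 1) / √g ≤ F g ρ 1 := by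
  have hsg : 0 < √g := sqrt_pos.2 hg
  set α := alpha g ρ with hαdef
  have hint : Integrable fun t : ℝ => exp (-t - g * t ^ 2 + ρ * t) := by
    simpa only [show ∀ t, -g * t ^ 2 + (ρ - 1) * t = -t - g * t ^ 2 + ρ * t from
      fun t => by ring] using integrable_exp_neg_mul_sq_add_mul hg (ρ - 1)
  have hcompl : ∀ t, -t - g * t ^ 2 + ρ * t = α ^ 2 - (√g * t - α) ^ 2 := by
    intro t
    have hs : √g * √g = g := mul_self_sqrt hg.le
    have h2 : 2 * √g * α = ρ - 1 := by rw [hαdef, alpha]; field_simp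
    linear_combination t ^ 2 * hs - t * h2
  have hwindow : ∀ t ∈ Set.Ioc (α / √g) ((α + 1) / √g),
      exp (α ^ 2 - 1) ≤ exp (-t - g * t ^ 2 + ρ * t) := by
    rintro t ⟨hlo, hhi⟩
    rw [div_lt_iff₀ hsg] at hlo
    rw [le_div_iff₀ hsg] at hhi
    rw [exp_le_exp, hcompl]
    nlinarith
  have hsub : Set.Ioc (α / √g) ((α + 1) / √g) ⊆ Set.Ioi 0 := fun t ht =>
    lt_of_le_of_lt (by positivity) ht.1
  calc exp (α ^ 2 - 1) / √g
      = exp (α ^ 2 - 1) * volume.real (Set.Ioc (α / √g) ((α + 1) / √g)) := by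
        rw [Real.volume_real_Ioc_of_le (by gcongr; linarith)]
        field_simp; ring
    _ ≤ ∫ t in Set.Ioc (α / √g) ((α + 1) / √g), exp (-t - g * t ^ 2 + ρ * t) :=
        setIntegral_ge_of_const_le_real measurableSet_Ioc (by simp) hwindow hint.integrableOn
    _ ≤ ∫ t in Set.Ioi 0, exp (-t - g * t ^ 2 + ρ * t) :=
        setIntegral_mono_set hint.integrableOn (ae_of_all _ fun t => (exp_pos _).le)
          hsub.eventuallyLE
    _ = F g ρ 1 := by simp [F]

lemma F_succ_div_F_one_pow_le {g ρ : ℝ} (hg : 0 < g) (hα : 0 ≤ alpha g ρ) (k : ℕ) :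
    F g ρ (k + 1) / F g ρ 1 ^ (k + 1) ≤
      √π * exp ((alpha g ρ + 1 / 2) ^ 2 - (k + 1) * (alpha g ρ ^ 2 - 1)) := by
  have hsg : 0 < √g := sqrt_pos.2 hg
  calc F g ρ (k + 1) / F g ρ 1 ^ (k + 1)
      ≤ (√π * exp ((alpha g ρ + 1 / 2) ^ 2) / √g ^ (k + 1)) /
          (exp (alpha g ρ ^ 2 - 1) / √g) ^ (k + 1) := by
        gcongr
        · exact F_succ_le hg ρ k
        · exact exp_sq_sub_one_div_sqrt_le_F_one hg hα
    _ = √π * exp ((alpha g ρ + 1 / 2) ^ 2 - (k + 1) * (alpha g ρ ^ 2 - 1)) := by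
        rw [div_pow, ← exp_nat_mul, div_div_div_cancel_right₀ (by positivity), mul_div_assoc,
          ← exp_sub]
        push_cast
        ring_nf

lemma tendsto_sq_sub_mul_sq_atBot {m : ℝ} (hm : 2 ≤ m) :
    Tendsto (fun a : ℝ => (a + 1 / 2) ^ 2 - m * (a ^ 2 - 1)) atTop atBot := by
  refine tendsto_atBot_mono (fun a => ?_)
    (tendsto_atBot_add_const_right _ (m + 5 / 4) tendsto_neg_atTop_atBot)
  nlinarith [sq_nonneg (a - 1), mul_nonneg (sub_nonneg.2 hm) (sq_nonneg a)]

lemma tendsto_F_div_F_one_pow {ρ : ℝ → ℝ} (hα : Tendsto (fun g => alpha g (ρ g)) atTop atTop)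
    {m : ℕ} (hm : 2 ≤ m) :
    Tendsto (fun g => F g (ρ g) m / F g (ρ g) 1 ^ m) atTop (𝓝 0) := by
  obtain ⟨k, rfl⟩ : ∃ k, m = k + 1 := ⟨m - 1, by omega⟩
  have hexponent := tendsto_sq_sub_mul_sq_atBot (m := k + 1) (by exact_mod_cast hm)
  have hbound := ((tendsto_exp_atBot.comp hexponent).comp hα).const_mul √π
  rw [mul_zero] at hbound
  refine squeeze_zero' (Eventually.of_forall fun g =>
    div_nonneg (F_nonneg _ _ _) (pow_nonneg (F_nonneg _ _ _) _)) ?_ hbound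
  filter_upwards [eventually_gt_atTop 0, hα.eventually_ge_atTop 0] with g hg hαg
  exact F_succ_div_F_one_pow_le hg hαg k

lemma eventually_F_one_pos {ρ : ℝ → ℝ} (hα : Tendsto (fun g => alpha g (ρ g)) atTop atTop) :
    ∀ᶠ g in atTop, 0 < F g (ρ g) 1 := by
  filter_upwards [eventually_gt_atTop 0, hα.eventually_ge_atTop 0] with g hg hαg
  have : 0 < √g := sqrt_pos.2 hg
  exact lt_of_lt_of_le (by positivity) (exp_sq_sub_one_div_sqrt_le_F_one hg hαg)

theorem quickstep_limit_a_top_general (d n : ℕ) (hd : 1 ≤ d)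
    (ρ : ℝ → ℝ)
    (hα : Tendsto (fun g : ℝ => (ρ g - 1) / (2 * Real.sqrt g)) atTop atTop)
    (s : Fin n → Fin d × Bool) :
    Tendsto (fun g : ℝ => Qweight d n g (ρ g) s) atTop
      (𝓝 (if SelfAvoiding s then ((csaw d n : ℝ))⁻¹ else 0)) :=
  tendsto_walkWeight_div_sum hd ((eventually_F_one_pos hα).mono fun _ h => h.ne')
    (fun _ hm => tendsto_F_div_F_one_pow hα hm) s

/-- if `α(g,ρ(g)) = (ρ(g)-1)/(2√g) → +∞` as `g → ∞`, the
quick-step weights converge to the uniform measure on self-avoiding walks. -/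
theorem quickstep_limit_a_top (d n : ℕ) (hd : 1 ≤ d) (hn : 1 ≤ n)
    (ρ : ℝ → ℝ)
    (hα : Tendsto (fun g : ℝ => (ρ g - 1) / (2 * Real.sqrt g)) atTop atTop)
    (s : Fin n → Fin d × Bool) :
    Tendsto (fun g : ℝ => Qweight d n g (ρ g) s) atTop
      (𝓝 (if SelfAvoiding s then ((csaw d n : ℝ))⁻¹ else 0)) :=
  quickstep_limit_a_top_general d n hd ρ hα s

end StrongInteraction
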